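/- arXiv:2001.04888 — 2 statements merged into one kernel-verified Lean document; each statement's English description precedes it below -/
import Mathlib

section
/- Let r₁, r₂ > 0. Then C₁₁(ε) + C₁₂(ε) converges, as ε → 0⁺, to (4π r₁ r₂/(r₁+r₂)) · ( −γ − ψ(r₂/(r₁+r₂)) ), where ψ(w) := Γ'(w)/Γ(w) is the logarithmic derivative of the real Gamma function and γ is the Euler–Mascheroni constant. Likewise C₂₂(ε) + C₂₁(ε) converges to (4π r₁ r₂/(r₁+r₂)) · ( −γ − ψ(r₁/(r₁+r₂)) ). -/
/-!
With `q = ξ₁ + ξ₂`, `C₁₁ + C₁₂ = 8πα ∑ₙ (e^{(2n+1)ξ₂} - 1) / (e^{(2n+1)q} - 1)`. Expanding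
`1 / (e^{sq} - 1)` as a geometric series and summing over the odd `s = 2n + 1` first turns this
into `4π ∑ₖ (α / sinh (kq + ξ₁) - α / sinh ((k+1)q))`. As `ε → 0⁺`, `α / q → R = r₁r₂/(r₁+r₂)`
and `ξ₁ / q → w = r₂/(r₁+r₂)`, so the `k`-th term tends to `R (1/(k+w) - 1/(k+1))`; the mean
value theorem bounds it by `O(1/k²)` uniformly, so the limit passes under the sum (Tannery), and
`∑ₖ (1/(k+w) - 1/(k+1)) = -γ - ψ(w)` follows by squeezing `ψ(w + n)` between the values of `ψ`
at consecutive integers, `ψ` being monotone because `log ∘ Γ` is convex. The second limit is the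
first one with `r₁` and `r₂` exchanged.
-/

open Real Filter Topology

/-- Half-distance between the fixed points of the composed reflections. -/
noncomputable def alphaBi (r₁ r₂ ε : ℝ) : ℝ :=
  Real.sqrt (ε * (2 * r₁ + ε) * (2 * r₂ + ε) * (2 * r₁ + 2 * r₂ + ε)) /
    (2 * (r₁ + r₂ + ε))

/-- Bispherical coordinate of the boundary of the first sphere. -/
noncomputable def xi1 (r₁ r₂ ε : ℝ) : ℝ := Real.arsinh (alphaBi r₁ r₂ ε / r₁)

/-- Bispherical coordinate of the boundary of the second sphere. -/
noncomputable def xi2 (r₁ r₂ ε : ℝ) : ℝ := Real.arsinh (alphaBi r₁ r₂ ε / r₂)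

/-- Capacitance coefficient C₁₁. -/
noncomputable def C11 (r₁ r₂ ε : ℝ) : ℝ :=
  8 * π * alphaBi r₁ r₂ ε *
    ∑' n : ℕ, Real.exp ((2 * n + 1) * xi2 r₁ r₂ ε) /
      (Real.exp ((2 * n + 1) * (xi1 r₁ r₂ ε + xi2 r₁ r₂ ε)) - 1)

/-- Capacitance coefficient C₂₂. -/
noncomputable def C22 (r₁ r₂ ε : ℝ) : ℝ :=
  8 * π * alphaBi r₁ r₂ ε *
    ∑' n : ℕ, Real.exp ((2 * n + 1) * xi1 r₁ r₂ ε) /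
      (Real.exp ((2 * n + 1) * (xi1 r₁ r₂ ε + xi2 r₁ r₂ ε)) - 1)

/-- Capacitance coefficient C₁₂. -/
noncomputable def C12 (r₁ r₂ ε : ℝ) : ℝ :=
  -(8 * π * alphaBi r₁ r₂ ε *
    ∑' n : ℕ, 1 / (Real.exp ((2 * n + 1) * (xi1 r₁ r₂ ε + xi2 r₁ r₂ ε)) - 1))

/-- Capacitance coefficient C₂₁. -/
noncomputable def C21 (r₁ r₂ ε : ℝ) : ℝ := C12 r₁ r₂ ε

/-- The digamma function ψ(w) = Γ'(w)/Γ(w). -/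
noncomputable def digamma (w : ℝ) : ℝ := deriv Real.Gamma w / Real.Gamma w

lemma cosh_div_sinh_sq_le {c : ℝ} (hc : 0 < c) : cosh c / sinh c ^ 2 ≤ 5 / c ^ 2 := by
  have hsinh : c ≤ sinh c := self_le_sinh_iff.mpr hc.le
  have hcosh : cosh c ≤ sinh c + 1 := by
    linarith [cosh_sub_sinh c, exp_le_one_iff.mpr (neg_nonpos.mpr hc.le)]
  have hsq : c ^ 2 ≤ 4 * sinh c := by
    rw [sinh_eq]
    linarith [quadratic_le_exp_of_nonneg hc.le, exp_le_one_iff.mpr (neg_nonpos.mpr hc.le)]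
  have hs : 0 < sinh c := hc.trans_le hsinh
  rw [div_le_div_iff₀ (by positivity) (by positivity)]
  nlinarith [mul_le_mul_of_nonneg_left hsq hs.le, pow_le_pow_left₀ hc.le hsinh 2]

lemma inv_sinh_sub_inv_sinh_le {u v : ℝ} (hu : 0 < u) (huv : u ≤ v) :
    (sinh u)⁻¹ - (sinh v)⁻¹ ≤ 5 * (v - u) / u ^ 2 := by
  have hderiv : ∀ x ∈ Set.Ici u,
      HasDerivAt (fun y => -(sinh y)⁻¹) (cosh x / sinh x ^ 2) x := fun x hx =>
    ((hasDerivAt_sinh x).fun_inv (sinh_pos_iff.mpr (hu.trans_le hx)).ne').fun_neg.congr_deriv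
      (by ring)
  have key := (convex_Ici u).image_sub_le_mul_sub_of_deriv_le (C := 5 / u ^ 2)
    (fun x hx => (hderiv x hx).continuousAt.continuousWithinAt)
    (fun x hx => (hderiv x (interior_subset hx)).differentiableAt.differentiableWithinAt)
    (fun x hx => by
      have hx' : u ≤ x := interior_subset (s := Set.Ici u) hx
      rw [(hderiv x hx').deriv]
      exact (cosh_div_sinh_sq_le (hu.trans_le hx')).trans (by gcongr))
    u Set.self_mem_Ici v huv huv
  linarith [show 5 / u ^ 2 * (v - u) = 5 * (v - u) / u ^ 2 by ring]

lemma hasSum_exp_neg_odd_mul {x : ℝ} (hx : 0 < x) :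
    HasSum (fun n : ℕ => exp (-((2 * n + 1) * x))) (2 * sinh x)⁻¹ := by
  have hr : exp (-x) ^ 2 < 1 := by
    rw [← exp_nat_mul]; exact exp_lt_one_iff.mpr (by push_cast; linarith)
  have hterm :
      (fun n : ℕ => exp (-((2 * n + 1) * x))) = fun n => exp (-x) * (exp (-x) ^ 2) ^ n := by
    ext n
    rw [← pow_mul, ← exp_nat_mul, ← exp_add]
    push_cast
    ring_nf
  have hval : (2 * sinh x)⁻¹ = exp (-x) * (1 - exp (-x) ^ 2)⁻¹ := by
    have h1 : 1 < exp x := one_lt_exp_iff.mpr hx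
    rw [sinh_eq, exp_neg]
    field_simp
  rw [hterm, hval]
  exact (hasSum_geometric_of_lt_one (by positivity) hr).mul_left _

lemma inv_exp_mul_sub_one_le {q s : ℝ} (hq : 0 < q) (hs : 1 ≤ s) :
    (exp (s * q) - 1)⁻¹ ≤ exp (-(s * q)) / (1 - exp (-q)) := by
  have hq' : exp (-q) < 1 := exp_lt_one_iff.mpr (by linarith)
  have hlow : exp (s * q) * (1 - exp (-q)) ≤ exp (s * q) - 1 := by
    have : 1 ≤ exp (s * q) * exp (-q) := by
      rw [← exp_add]; exact one_le_exp (by nlinarith)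
    linarith
  calc (exp (s * q) - 1)⁻¹ ≤ (exp (s * q) * (1 - exp (-q)))⁻¹ :=
        inv_anti₀ (mul_pos (exp_pos _) (by linarith)) hlow
    _ = exp (-(s * q)) / (1 - exp (-q)) := by rw [exp_neg (s * q)]; field_simp

lemma summable_exp_mul_div_exp_mul_sub_one {a b : ℝ} (ha : 0 ≤ a) (hb : 0 < b) :
    Summable fun n : ℕ => exp ((2 * n + 1) * a) / (exp ((2 * n + 1) * (b + a)) - 1) := by
  refine ((hasSum_exp_neg_odd_mul hb).summable.div_const (1 - exp (-(b + a)))).of_nonneg_of_le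
    (fun n => ?_) (fun n => ?_)
  · exact div_nonneg (exp_pos _).le (sub_nonneg.mpr (one_le_exp (by positivity)))
  · calc exp ((2 * n + 1) * a) / (exp ((2 * n + 1) * (b + a)) - 1)
        ≤ exp ((2 * n + 1) * a) * (exp (-((2 * n + 1) * (b + a))) / (1 - exp (-(b + a)))) := by
          rw [div_eq_mul_inv]
          gcongr
          exact inv_exp_mul_sub_one_le (by positivity) (by linarith [n.cast_nonneg (α := ℝ)])
      _ = exp (-((2 * n + 1) * b)) / (1 - exp (-(b + a))) := by
          rw [← mul_div_assoc, ← exp_add]; ring_nf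

lemma hasSum_exp_neg_mul_sub_exp_neg_mul {a b s : ℝ} (ha : 0 ≤ a) (hb : 0 < b) (hs : 0 < s) :
    HasSum (fun k : ℕ => exp (-(s * (k * (b + a) + b))) - exp (-(s * ((k + 1) * (b + a)))))
      ((exp (s * a) - 1) / (exp (s * (b + a)) - 1)) := by
  have hr : exp (-(s * (b + a))) < 1 := exp_lt_one_iff.mpr (neg_lt_zero.mpr (by positivity))
  have hterm : (fun k : ℕ => exp (-(s * (k * (b + a) + b))) - exp (-(s * ((k + 1) * (b + a))))) =
      fun k => (exp (-(s * b)) - exp (-(s * (b + a)))) * exp (-(s * (b + a))) ^ k := by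
    ext k
    simp only [← exp_nat_mul, sub_mul, ← exp_add]
    ring_nf
  have hval : (exp (s * a) - 1) / (exp (s * (b + a)) - 1) =
      (exp (-(s * b)) - exp (-(s * (b + a)))) * (1 - exp (-(s * (b + a))))⁻¹ := by
    have h1 : 1 < exp (s * (b + a)) := one_lt_exp_iff.mpr (by positivity)
    rw [exp_neg, exp_neg, mul_add, exp_add]
    field_simp
  rw [hterm, hval]
  exact (hasSum_geometric_of_lt_one (exp_pos _).le hr).mul_left _

theorem tsum_exp_sub_one_div_exp_sub_one {a b : ℝ} (ha : 0 ≤ a) (hb : 0 < b) :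
    ∑' n : ℕ, (exp ((2 * n + 1) * a) - 1) / (exp ((2 * n + 1) * (b + a)) - 1) =
      ∑' k : ℕ, ((2 * sinh (k * (b + a) + b))⁻¹ - (2 * sinh ((k + 1) * (b + a)))⁻¹) := by
  let F : ℕ → ℕ → ℝ := fun n k =>
    exp (-((2 * n + 1) * (k * (b + a) + b))) - exp (-((2 * n + 1) * ((k + 1) * (b + a))))
  have hF : ∀ n k, 0 ≤ F n k := fun n k =>
    sub_nonneg.mpr (exp_le_exp.mpr (by nlinarith [n.cast_nonneg (α := ℝ)]))
  have hrow (n : ℕ) : HasSum (F n)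
      ((exp ((2 * n + 1) * a) - 1) / (exp ((2 * n + 1) * (b + a)) - 1)) :=
    hasSum_exp_neg_mul_sub_exp_neg_mul ha hb (by positivity)
  have hcol (k : ℕ) : HasSum (fun n => F n k)
      ((2 * sinh (k * (b + a) + b))⁻¹ - (2 * sinh ((k + 1) * (b + a)))⁻¹) :=
    (hasSum_exp_neg_odd_mul (by positivity)).sub (hasSum_exp_neg_odd_mul (by positivity))
  have hsum : Summable (Function.uncurry F) := by
    refine (summable_prod_of_nonneg fun p => hF p.1 p.2).mpr ⟨fun n => (hrow n).summable, ?_⟩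
    simp only [fun n => (hrow n).tsum_eq, sub_div]
    exact (summable_exp_mul_div_exp_mul_sub_one ha hb).sub (by
      simpa using summable_exp_mul_div_exp_mul_sub_one le_rfl (add_pos_of_pos_of_nonneg hb ha))
  calc _ = ∑' (n : ℕ) (k : ℕ), F n k := tsum_congr fun n => (hrow n).tsum_eq.symm
    _ = ∑' (k : ℕ) (n : ℕ), F n k := hsum.tsum_comm.symm
    _ = _ := tsum_congr fun k => (hcol k).tsum_eq

lemma tendsto_sinh_div_self : Tendsto (fun x : ℝ => sinh x / x) (𝓝[≠] 0) (𝓝 1) := by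
  simpa [div_eq_inv_mul] using (hasDerivAt_sinh 0).tendsto_slope_zero

lemma tendsto_arsinh_div_self : Tendsto (fun x : ℝ => arsinh x / x) (𝓝[≠] 0) (𝓝 1) := by
  simpa [div_eq_inv_mul] using (hasDerivAt_arsinh 0).tendsto_slope_zero

lemma tendsto_arsinh_div_div_self {X : Type*} {l : Filter X} {f : X → ℝ} {r : ℝ} (hr : r ≠ 0)
    (hf : Tendsto f l (𝓝 0)) (hf0 : ∀ᶠ x in l, f x ≠ 0) :
    Tendsto (fun x => arsinh (f x / r) / f x) l (𝓝 r⁻¹) := by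
  have hfr : Tendsto (fun x => f x / r) l (𝓝[≠] 0) :=
    tendsto_nhdsWithin_of_tendsto_nhds_of_eventually_within _ (by simpa using hf.div_const r)
      (hf0.mono fun x hx => div_ne_zero hx hr)
  have key := (tendsto_arsinh_div_self.comp hfr).div_const r
  rw [one_div] at key
  refine key.congr' ?_
  filter_upwards [hf0] with x hx
  simp only [Function.comp_apply]
  field_simp

lemma tendsto_div_sinh {X : Type*} {l : Filter X} {α q m : X → ℝ} {R c : ℝ} (hc : 0 < c)
    (hq : Tendsto q l (𝓝 0)) (hq0 : ∀ᶠ x in l, q x ≠ 0)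
    (hα : Tendsto (fun x => α x / q x) l (𝓝 R)) (hm : Tendsto (fun x => m x / q x) l (𝓝 c)) :
    Tendsto (fun x => α x / sinh (m x)) l (𝓝 (R / c)) := by
  have hm0 : ∀ᶠ x in l, m x ≠ 0 :=
    (hm.eventually_ne hc.ne').mono fun x h h0 => h (by rw [h0, zero_div])
  have hmq : Tendsto m l (𝓝 0) := by
    refine (by simpa using hm.mul hq : Tendsto (fun x => m x / q x * q x) l (𝓝 0)).congr' ?_
    filter_upwards [hq0] with x hx using div_mul_cancel₀ _ hx
  have hsinh : Tendsto (fun x => sinh (m x) / m x) l (𝓝 1) :=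
    tendsto_sinh_div_self.comp (tendsto_nhdsWithin_of_tendsto_nhds_of_eventually_within _ hmq hm0)
  have key := hα.mul ((hm.mul hsinh).inv₀ (by positivity))
  rw [mul_one, ← div_eq_mul_inv] at key
  refine key.congr' ?_
  filter_upwards [hq0, hm0] with x hqx hmx
  field_simp

lemma abs_div_sinh_sub_div_sinh_le (α : ℝ) {b q : ℝ} (hb : 0 < b) (hbq : b ≤ q) (k : ℕ) :
    |α / sinh (k * q + b) - α / sinh ((k + 1) * q)| ≤
      5 * (|α / q| * (b / q)⁻¹ ^ 2) / (k + 1) ^ 2 := by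
  have hq : 0 < q := hb.trans_le hbq
  have hu : (k + 1) * b ≤ k * q + b := by nlinarith [k.cast_nonneg (α := ℝ)]
  have huv : k * q + b ≤ (k + 1) * q := by linarith
  have hu0 : 0 < k * q + b := by positivity
  have hnn : 0 ≤ (sinh (k * q + b))⁻¹ - (sinh ((k + 1) * q))⁻¹ :=
    sub_nonneg.mpr (inv_anti₀ (sinh_pos_iff.mpr hu0) (sinh_le_sinh.mpr huv))
  rw [div_eq_mul_inv, div_eq_mul_inv, ← mul_sub, abs_mul, abs_of_nonneg hnn]
  calc |α| * ((sinh (k * q + b))⁻¹ - (sinh ((k + 1) * q))⁻¹)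
      ≤ |α| * (5 * ((k + 1) * q - (k * q + b)) / (k * q + b) ^ 2) := by
        gcongr; exact inv_sinh_sub_inv_sinh_le hu0 huv
    _ ≤ |α| * (5 * q / ((k + 1) * b) ^ 2) := by gcongr; linarith
    _ = 5 * (|α / q| * (b / q)⁻¹ ^ 2) / (k + 1) ^ 2 := by
        rw [abs_div, abs_of_pos hq]
        field_simp

lemma summable_div_nat_succ_sq (C : ℝ) : Summable fun k : ℕ => C / ((k : ℝ) + 1) ^ 2 := by
  have := (summable_nat_add_iff 1).mpr (Real.summable_one_div_nat_pow.mpr one_lt_two)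
  simpa [div_eq_mul_inv] using this.mul_left C

theorem tendsto_tsum_div_sinh_sub_div_sinh {X : Type*} {l : Filter X} {α b q : X → ℝ} {R w : ℝ}
    (hw : 0 < w) (hq : Tendsto q l (𝓝 0)) (hα : Tendsto (fun x => α x / q x) l (𝓝 R))
    (hb : Tendsto (fun x => b x / q x) l (𝓝 w)) (hbq : ∀ᶠ x in l, 0 < b x ∧ b x ≤ q x) :
    Tendsto (fun x => ∑' k : ℕ, (α x / sinh (k * q x + b x) - α x / sinh ((k + 1) * q x))) l
      (𝓝 (∑' k : ℕ, (R / (k + w) - R / (k + 1)))) := by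
  have hq0 : ∀ᶠ x in l, q x ≠ 0 := hbq.mono fun x h => (h.1.trans_le h.2).ne'
  have hratio : Tendsto (fun x => |α x / q x| * (b x / q x)⁻¹ ^ 2) l (𝓝 (|R| * w⁻¹ ^ 2)) :=
    hα.abs.mul ((hb.inv₀ hw.ne').pow 2)
  refine tendsto_tsum_of_dominated_convergence (summable_div_nat_succ_sq (5 * (|R| * w⁻¹ ^ 2 + 1)))
    (fun k => ?_) ?_
  · have hfirst : Tendsto (fun x => (k * q x + b x) / q x) l (𝓝 (k + w)) := by
      refine (tendsto_const_nhds.add hb).congr' ?_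
      filter_upwards [hq0] with x hx
      field_simp
    have hsecond : Tendsto (fun x => (k + 1) * q x / q x) l (𝓝 (k + 1)) := by
      refine tendsto_const_nhds.congr' ?_
      filter_upwards [hq0] with x hx
      field_simp
    exact (tendsto_div_sinh (by positivity) hq hq0 hα hfirst).sub
      (tendsto_div_sinh (by positivity) hq hq0 hα hsecond)
  · filter_upwards [hbq, hratio.eventually_le_const (lt_add_one _)] with x hx hle k
    refine (abs_div_sinh_sub_div_sinh_le (α x) hx.1 hx.2 k).trans ?_
    gcongr

lemma differentiableAt_log_Gamma {x : ℝ} (hx : 0 < x) : DifferentiableAt ℝ (log ∘ Gamma) x :=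
  (differentiableAt_Gamma fun m => by linarith [m.cast_nonneg (α := ℝ)]).log
    (Gamma_pos_of_pos hx).ne'

lemma digamma_eq_deriv_log_Gamma {x : ℝ} (hx : 0 < x) : digamma x = deriv (log ∘ Gamma) x := by
  rw [digamma, Function.comp_def,
    deriv.log (differentiableAt_Gamma fun m => by linarith [m.cast_nonneg (α := ℝ)])
      (Gamma_pos_of_pos hx).ne']

lemma monotoneOn_digamma : MonotoneOn digamma (Set.Ioi 0) := fun x hx y hy hxy => by
  rw [digamma_eq_deriv_log_Gamma hx, digamma_eq_deriv_log_Gamma hy]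
  exact convexOn_log_Gamma.monotoneOn_deriv (fun _ hz => differentiableAt_log_Gamma hz) hx hy hxy

lemma digamma_add_one {x : ℝ} (hx : 0 < x) : digamma (x + 1) = digamma x + x⁻¹ := by
  have hrec : ∀ y > 0, (log ∘ Gamma) (y + 1) = (log ∘ Gamma) y + log y := fun y hy => by
    simp only [Function.comp_apply, Gamma_add_one hy.ne',
      log_mul hy.ne' (Gamma_pos_of_pos hy).ne', add_comm]
  rw [digamma_eq_deriv_log_Gamma (by positivity), digamma_eq_deriv_log_Gamma hx,
    ← deriv_comp_add_const, ← deriv_log,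
    ← deriv_add (differentiableAt_log_Gamma hx) (differentiableAt_log hx.ne')]
  exact Filter.EventuallyEq.deriv_eq (by filter_upwards [eventually_gt_nhds hx] using hrec)

lemma digamma_add_nat {x : ℝ} (hx : 0 < x) (n : ℕ) :
    digamma (x + n) = digamma x + ∑ k ∈ Finset.range n, (x + k)⁻¹ := by
  induction n with
  | zero => simp
  | succ n ih =>
    rw [Nat.cast_succ, ← add_assoc, digamma_add_one (by positivity), ih, Finset.sum_range_succ,
      add_assoc]

lemma digamma_nat_add_one (n : ℕ) :
    digamma (n + 1) = -eulerMascheroniConstant + ∑ k ∈ Finset.range n, ((k : ℝ) + 1)⁻¹ := by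
  rw [digamma, deriv_Gamma_nat, Gamma_nat_eq_factorial,
    mul_div_cancel_left₀ _ (Nat.cast_ne_zero.mpr n.factorial_ne_zero), harmonic]
  push_cast
  rfl

theorem hasSum_inv_add_sub_inv_succ {w : ℝ} (hw : 0 < w) (hw1 : w ≤ 1) :
    HasSum (fun k : ℕ => ((k : ℝ) + w)⁻¹ - ((k : ℝ) + 1)⁻¹)
      (-eulerMascheroniConstant - digamma w) := by
  set P : ℕ → ℝ := fun n => ∑ k ∈ Finset.range n, (((k : ℝ) + w)⁻¹ - ((k : ℝ) + 1)⁻¹)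
  have hP (n : ℕ) :
      P n = ∑ k ∈ Finset.range n, (w + k)⁻¹ - ∑ k ∈ Finset.range n, ((k : ℝ) + 1)⁻¹ := by
    simp only [P, Finset.sum_sub_distrib, add_comm w]
  have hmono (x y : ℝ) (hx : 0 < x) (hxy : x ≤ y) : digamma x ≤ digamma y :=
    monotoneOn_digamma hx (hx.trans_le hxy) hxy
  have hlower (n : ℕ) : -eulerMascheroniConstant - digamma w - ((n : ℝ) + 1)⁻¹ ≤ P (n + 1) := by
    have := hmono (n + 1) (w + (n + 1 : ℕ)) (by positivity) (by push_cast; linarith)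
    rw [digamma_add_nat hw, digamma_nat_add_one] at this
    rw [hP, Finset.sum_range_succ (fun k : ℕ => ((k : ℝ) + 1)⁻¹)]; linarith
  have hupper (n : ℕ) : P (n + 1) ≤ -eulerMascheroniConstant - digamma w := by
    have := hmono (w + (n + 1 : ℕ)) ((n + 1 : ℕ) + 1) (by positivity) (by push_cast; linarith)
    rw [digamma_add_nat hw, digamma_nat_add_one] at this
    rw [hP]; linarith
  have hlim : Tendsto (fun n => P (n + 1)) atTop (𝓝 (-eulerMascheroniConstant - digamma w)) := by
    refine tendsto_of_tendsto_of_tendsto_of_le_of_le ?_ tendsto_const_nhds hlower hupper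
    simpa using tendsto_one_div_add_atTop_nhds_zero_nat.const_sub
      (-eulerMascheroniConstant - digamma w)
  refine (hasSum_iff_tendsto_nat_of_nonneg (fun k => ?_) _).mpr
    ((tendsto_add_atTop_iff_nat 1).mp hlim)
  exact sub_nonneg.mpr (inv_anti₀ (by positivity) (by linarith))

section Bispherical

variable {r₁ r₂ : ℝ}

lemma eventually_alphaBi_pos (hr₁ : 0 < r₁) (hr₂ : 0 < r₂) :
    ∀ᶠ ε in 𝓝[>] (0 : ℝ), 0 < alphaBi r₁ r₂ ε :=
  eventually_nhdsWithin_of_forall fun ε (hε : 0 < ε) => by unfold alphaBi; positivity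

lemma tendsto_alphaBi (h : r₁ + r₂ ≠ 0) : Tendsto (alphaBi r₁ r₂) (𝓝 0) (𝓝 0) := by
  have hcont : ContinuousAt (alphaBi r₁ r₂) 0 := by
    unfold alphaBi
    exact ContinuousAt.div (by fun_prop) (by fun_prop) (by simpa using h)
  simpa [alphaBi] using hcont.tendsto

lemma tendsto_xi1_add_xi2 (h : r₁ + r₂ ≠ 0) :
    Tendsto (fun ε => xi1 r₁ r₂ ε + xi2 r₁ r₂ ε) (𝓝 0) (𝓝 0) := by
  simpa [xi1, xi2] using
    ((tendsto_alphaBi h).div_const r₁).arsinh.add ((tendsto_alphaBi h).div_const r₂).arsinh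

lemma tendsto_xi1_div_alphaBi (hr₁ : 0 < r₁) (hr₂ : 0 < r₂) :
    Tendsto (fun ε => xi1 r₁ r₂ ε / alphaBi r₁ r₂ ε) (𝓝[>] 0) (𝓝 r₁⁻¹) :=
  tendsto_arsinh_div_div_self hr₁.ne'
    ((tendsto_alphaBi (by positivity)).mono_left nhdsWithin_le_nhds)
    ((eventually_alphaBi_pos hr₁ hr₂).mono fun _ h => h.ne')

lemma tendsto_xi2_div_alphaBi (hr₁ : 0 < r₁) (hr₂ : 0 < r₂) :
    Tendsto (fun ε => xi2 r₁ r₂ ε / alphaBi r₁ r₂ ε) (𝓝[>] 0) (𝓝 r₂⁻¹) :=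
  tendsto_arsinh_div_div_self hr₂.ne'
    ((tendsto_alphaBi (by positivity)).mono_left nhdsWithin_le_nhds)
    ((eventually_alphaBi_pos hr₁ hr₂).mono fun _ h => h.ne')

lemma tendsto_alphaBi_div_xi1_add_xi2 (hr₁ : 0 < r₁) (hr₂ : 0 < r₂) :
    Tendsto (fun ε => alphaBi r₁ r₂ ε / (xi1 r₁ r₂ ε + xi2 r₁ r₂ ε)) (𝓝[>] 0)
      (𝓝 (r₁ * r₂ / (r₁ + r₂))) := by
  have hR : (r₁⁻¹ + r₂⁻¹)⁻¹ = r₁ * r₂ / (r₁ + r₂) := by field_simp; ring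
  simpa only [hR, ← add_div, inv_div] using
    ((tendsto_xi1_div_alphaBi hr₁ hr₂).add (tendsto_xi2_div_alphaBi hr₁ hr₂)).inv₀
      (by positivity)

lemma tendsto_xi1_div_xi1_add_xi2 (hr₁ : 0 < r₁) (hr₂ : 0 < r₂) :
    Tendsto (fun ε => xi1 r₁ r₂ ε / (xi1 r₁ r₂ ε + xi2 r₁ r₂ ε)) (𝓝[>] 0)
      (𝓝 (r₂ / (r₁ + r₂))) := by
  have hw : r₁⁻¹ / (r₁⁻¹ + r₂⁻¹) = r₂ / (r₁ + r₂) := by field_simp; ring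
  have key := (tendsto_xi1_div_alphaBi hr₁ hr₂).div
    ((tendsto_xi1_div_alphaBi hr₁ hr₂).add (tendsto_xi2_div_alphaBi hr₁ hr₂)) (by positivity)
  rw [hw] at key
  refine key.congr' ?_
  filter_upwards [eventually_alphaBi_pos hr₁ hr₂] with ε h
  simp only [Pi.div_apply, ← add_div]
  exact div_div_div_cancel_right₀ h.ne' _ _

lemma C11_add_C12_eq {ε : ℝ} (h₁ : 0 < xi1 r₁ r₂ ε) (h₂ : 0 ≤ xi2 r₁ r₂ ε) :
    C11 r₁ r₂ ε + C12 r₁ r₂ ε = 4 * π * ∑' k : ℕ,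
      (alphaBi r₁ r₂ ε / sinh (k * (xi1 r₁ r₂ ε + xi2 r₁ r₂ ε) + xi1 r₁ r₂ ε) -
        alphaBi r₁ r₂ ε / sinh ((k + 1) * (xi1 r₁ r₂ ε + xi2 r₁ r₂ ε))) := by
  have hB := summable_exp_mul_div_exp_mul_sub_one le_rfl (add_pos_of_pos_of_nonneg h₁ h₂)
  simp only [mul_zero, exp_zero, add_zero] at hB
  rw [C11, C12, ← sub_eq_add_neg, ← mul_sub,
    ← (summable_exp_mul_div_exp_mul_sub_one h₂ h₁).tsum_sub hB]
  simp only [← sub_div]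
  rw [tsum_exp_sub_one_div_exp_sub_one h₂ h₁, ← tsum_mul_left, ← tsum_mul_left]
  congr 1
  ext k
  ring

lemma C22_add_C21_eq (ε : ℝ) : C22 r₁ r₂ ε + C21 r₁ r₂ ε = C11 r₂ r₁ ε + C12 r₂ r₁ ε := by
  have hα : alphaBi r₂ r₁ ε = alphaBi r₁ r₂ ε := by
    unfold alphaBi
    ring_nf
  simp only [C22, C21, C12, C11, xi1, xi2, hα, add_comm (arsinh (alphaBi r₁ r₂ ε / r₁))]

theorem tendsto_C11_add_C12 (hr₁ : 0 < r₁) (hr₂ : 0 < r₂) :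
    Tendsto (fun ε => C11 r₁ r₂ ε + C12 r₁ r₂ ε) (𝓝[>] (0 : ℝ))
      (𝓝 (4 * π * r₁ * r₂ / (r₁ + r₂) *
        (-eulerMascheroniConstant - digamma (r₂ / (r₁ + r₂))))) := by
  have hxi : ∀ᶠ ε in 𝓝[>] (0 : ℝ), 0 < xi1 r₁ r₂ ε ∧ 0 < xi2 r₁ r₂ ε :=
    (eventually_alphaBi_pos hr₁ hr₂).mono fun ε h =>
      ⟨arsinh_pos_iff.mpr (by positivity), arsinh_pos_iff.mpr (by positivity)⟩
  have hsum : HasSum (fun k : ℕ => r₁ * r₂ / (r₁ + r₂) / (k + r₂ / (r₁ + r₂)) -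
      r₁ * r₂ / (r₁ + r₂) / (k + 1))
      (r₁ * r₂ / (r₁ + r₂) * (-eulerMascheroniConstant - digamma (r₂ / (r₁ + r₂)))) := by
    have hw1 : r₂ / (r₁ + r₂) ≤ 1 := div_le_one_of_le₀ (by linarith) (by positivity)
    simpa only [mul_sub, div_eq_mul_inv] using
      (hasSum_inv_add_sub_inv_succ (by positivity) hw1).mul_left (r₁ * r₂ / (r₁ + r₂))
  have key := (tendsto_tsum_div_sinh_sub_div_sinh (by positivity)
    ((tendsto_xi1_add_xi2 (by positivity)).mono_left nhdsWithin_le_nhds)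
    (tendsto_alphaBi_div_xi1_add_xi2 hr₁ hr₂) (tendsto_xi1_div_xi1_add_xi2 hr₁ hr₂)
    (hxi.mono fun ε h => ⟨h.1, by linarith⟩)).const_mul (4 * π)
  rw [hsum.tsum_eq] at key
  convert key.congr' (hxi.mono fun ε h => (C11_add_C12_eq h.1 h.2.le).symm) using 2
  ring

end Bispherical

theorem C11_add_C12_and_C22_add_C21_tendsto (r₁ r₂ : ℝ) (hr₁ : 0 < r₁) (hr₂ : 0 < r₂) :
    Tendsto (fun ε => C11 r₁ r₂ ε + C12 r₁ r₂ ε) (𝓝[>] (0 : ℝ))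
      (𝓝 (4 * π * r₁ * r₂ / (r₁ + r₂) *
        (-Real.eulerMascheroniConstant - digamma (r₂ / (r₁ + r₂))))) ∧
    Tendsto (fun ε => C22 r₁ r₂ ε + C21 r₁ r₂ ε) (𝓝[>] (0 : ℝ))
      (𝓝 (4 * π * r₁ * r₂ / (r₁ + r₂) *
        (-Real.eulerMascheroniConstant - digamma (r₁ / (r₁ + r₂))))) := by
  refine ⟨tendsto_C11_add_C12 hr₁ hr₂, ?_⟩
  simp only [C22_add_C21_eq]
  simpa only [add_comm r₂ r₁, mul_right_comm (4 * π) r₂ r₁] using tendsto_C11_add_C12 hr₂ hr₁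
end

section
/- Let r₁, r₂ > 0. As ε → 0⁺, α(ε)/(ξ₁(ε) + ξ₂(ε)) = r₁r₂/(r₁+r₂) + O(ε). -/
open Real Filter Topology

open Asymptotics

/-! Since `arsinh y = y + O(y³)`, the denominator `ξ₁ + ξ₂` is `(1/r₁ + 1/r₂) α + O(α³)`, so
`α / (ξ₁ + ξ₂) = r₁ r₂ / (r₁ + r₂) + O(α²)`; and `α(ε)²` is `ε` times a function continuous
at `ε = 0`, hence `O(ε)`. -/

lemma abs_inv_sqrt_one_add_sq_sub_one_le (y : ℝ) : |(√(1 + y ^ 2))⁻¹ - 1| ≤ y ^ 2 := by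
  set s := √(1 + y ^ 2)
  have hs : 1 ≤ s := Real.one_le_sqrt.2 (by nlinarith [sq_nonneg y])
  have hsq : s ^ 2 = 1 + y ^ 2 := Real.sq_sqrt (by positivity)
  have hinv : s⁻¹ ≤ 1 := inv_le_one_of_one_le₀ hs
  have hmul : s * s⁻¹ = 1 := mul_inv_cancel₀ (by positivity)
  rw [abs_sub_comm, abs_of_nonneg (sub_nonneg.2 hinv)]
  nlinarith [inv_pos.2 (zero_lt_one.trans_le hs)]

lemma abs_arsinh_sub_self_le (x : ℝ) : |arsinh x - x| ≤ |x| ^ 3 := by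
  have hderiv : ∀ y, HasDerivAt (fun y => arsinh y - y) ((√(1 + y ^ 2))⁻¹ - 1) y :=
    fun y => (hasDerivAt_arsinh y).sub (hasDerivAt_id y)
  have hbound : ∀ y ∈ Metric.closedBall (0 : ℝ) |x|, ‖(√(1 + y ^ 2))⁻¹ - 1‖ ≤ |x| ^ 2 := by
    intro y hy
    rw [mem_closedBall_zero_iff, norm_eq_abs] at hy
    calc _ ≤ y ^ 2 := abs_inv_sqrt_one_add_sq_sub_one_le y
      _ = |y| ^ 2 := (sq_abs y).symm
      _ ≤ |x| ^ 2 := by gcongr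
  have := (convex_closedBall (0 : ℝ) |x|).norm_image_sub_le_of_norm_hasDerivWithin_le
    (fun y _ => (hderiv y).hasDerivWithinAt) hbound (Metric.mem_closedBall_self (abs_nonneg x))
    (by simp : x ∈ Metric.closedBall (0 : ℝ) |x|)
  simpa [pow_succ] using this

lemma arsinh_sub_self_isBigO : (fun x => arsinh x - x) =O[𝓝 0] (fun x => x ^ 3) :=
  isBigO_of_le _ fun x => by simpa only [norm_eq_abs, abs_pow] using abs_arsinh_sub_self_le x

lemma arsinh_div_sub_div_isBigO (a : ℝ) :
    (fun x => arsinh (x / a) - x / a) =O[𝓝 0] (fun x => x ^ 3) := by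
  have hdiv : Tendsto (fun x : ℝ => x / a) (𝓝 0) (𝓝 0) := by
    simpa using (continuous_id.div_const a).tendsto 0
  exact (arsinh_sub_self_isBigO.comp_tendsto hdiv).trans
    ((isBigO_const_mul_self (a⁻¹ ^ 3) (fun x : ℝ => x ^ 3) _).congr_left fun x => by
      simp only [Function.comp_apply]; ring)

lemma div_sub_inv_isBigO {f : ℝ → ℝ} {A : ℝ} (hA : A ≠ 0)
    (hf : (fun x => f x - A * x) =O[𝓝 0] (fun x => x ^ 3)) :
    (fun x => x / f x - A⁻¹) =O[𝓝[≠] 0] (fun x => x ^ 2) := by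
  -- `f ~ A x` gives `(f x)⁻¹ = O(x⁻¹)`, and `x / f x - A⁻¹ = -A⁻¹ (f x - A x) (f x)⁻¹`.
  have hequiv : f ~[𝓝 0] (fun x => A * x) :=
    hf.trans_isLittleO ((isLittleO_pow_pow (by norm_num : 1 < 3)).trans_isBigO
      (by simpa using isBigO_self_const_mul hA (fun x : ℝ => x) _))
  have hxf : (fun x => x) =O[𝓝 0] f :=
    (isBigO_self_const_mul hA _ _).trans hequiv.isBigO_symm
  have hfinv : (fun x => (f x)⁻¹) =O[𝓝 0] (fun x => x⁻¹) :=
    hxf.inv_rev (hf.eq_zero_imp.mono fun x hx hx0 => by simpa [hx0] using hx (by simp [hx0]))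
  have hprod := (hf.mul hfinv).mono (nhdsWithin_le_nhds (s := {0}ᶜ))
  refine (hprod.const_mul_left (-A⁻¹)).congr' ?_ ?_
  · filter_upwards [self_mem_nhdsWithin, nhdsWithin_le_nhds hxf.eq_zero_imp] with x hx0 hfx
    have : f x ≠ 0 := fun h => hx0 (hfx h)
    field_simp
    ring
  · filter_upwards [self_mem_nhdsWithin] with x hx0
    field_simp

lemma alphaBi_pos {r₁ r₂ ε : ℝ} (hr₁ : 0 ≤ r₁) (hr₂ : 0 ≤ r₂) (hε : 0 < ε) :
    0 < alphaBi r₁ r₂ ε := by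
  unfold alphaBi
  positivity

lemma alphaBi_sq {r₁ r₂ ε : ℝ} (hr₁ : 0 ≤ r₁) (hr₂ : 0 ≤ r₂) (hε : 0 ≤ ε) :
    alphaBi r₁ r₂ ε ^ 2 =
      ε * ((2 * r₁ + ε) * (2 * r₂ + ε) * (2 * r₁ + 2 * r₂ + ε) / (2 * (r₁ + r₂ + ε)) ^ 2) := by
  rw [alphaBi, div_pow, Real.sq_sqrt (by positivity)]
  ring

lemma continuousAt_alphaBi_zero {r₁ r₂ : ℝ} (hr : r₁ + r₂ ≠ 0) :
    ContinuousAt (alphaBi r₁ r₂) 0 := by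
  unfold alphaBi
  fun_prop (disch := simpa using hr)

lemma tendsto_alphaBi_nhdsGT_zero {r₁ r₂ : ℝ} (hr₁ : 0 < r₁) (hr₂ : 0 < r₂) :
    Tendsto (alphaBi r₁ r₂) (𝓝[>] 0) (𝓝[≠] 0) := by
  refine tendsto_nhdsWithin_iff.2 ⟨?_, ?_⟩
  · have h := (continuousAt_alphaBi_zero (by positivity : r₁ + r₂ ≠ 0)).tendsto
    simp only [alphaBi, zero_mul, Real.sqrt_zero, zero_div] at h
    exact h.mono_left nhdsWithin_le_nhds
  · filter_upwards [self_mem_nhdsWithin] with ε hε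
    exact (alphaBi_pos hr₁.le hr₂.le hε).ne'

lemma alphaBi_sq_isBigO {r₁ r₂ : ℝ} (hr₁ : 0 < r₁) (hr₂ : 0 < r₂) :
    (fun ε => alphaBi r₁ r₂ ε ^ 2) =O[𝓝[>] 0] (fun ε => ε) := by
  have hq : ContinuousAt (fun ε : ℝ => (2 * r₁ + ε) * (2 * r₂ + ε) * (2 * r₁ + 2 * r₂ + ε) /
      (2 * (r₁ + r₂ + ε)) ^ 2) 0 := by
    fun_prop (disch := positivity)
  refine ((isBigO_refl (fun ε : ℝ => ε) _).mul
    ((hq.tendsto.isBigO_one ℝ).mono nhdsWithin_le_nhds)).congr' ?_ (by simp)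
  filter_upwards [self_mem_nhdsWithin] with ε hε
  rw [alphaBi_sq hr₁.le hr₂.le hε.le]

theorem alphaBi_div_xi_sum_asymptotics (r₁ r₂ : ℝ) (hr₁ : 0 < r₁) (hr₂ : 0 < r₂) :
    (fun ε => alphaBi r₁ r₂ ε / (xi1 r₁ r₂ ε + xi2 r₁ r₂ ε) -
        r₁ * r₂ / (r₁ + r₂))
      =O[𝓝[>] (0 : ℝ)] (fun ε => ε) := by
  have hA : r₁⁻¹ + r₂⁻¹ ≠ 0 := by positivity
  have hsum : (fun x => arsinh (x / r₁) + arsinh (x / r₂) - (r₁⁻¹ + r₂⁻¹) * x)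
      =O[𝓝 0] (fun x => x ^ 3) :=
    ((arsinh_div_sub_div_isBigO r₁).add (arsinh_div_sub_div_isBigO r₂)).congr_left
      fun x => by ring
  have hlim : r₁ * r₂ / (r₁ + r₂) = (r₁⁻¹ + r₂⁻¹)⁻¹ := by
    field_simp
    ring
  rw [hlim]
  exact ((div_sub_inv_isBigO hA hsum).comp_tendsto (tendsto_alphaBi_nhdsGT_zero hr₁ hr₂)).trans
    (alphaBi_sq_isBigO hr₁ hr₂)
end
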